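/- Let G be a finite soluble group and N a minimal normal subgroup of G that is complemented in G. Then m(G/N) = m(G) - 1, where m(X) denotes the largest size of an irredundant generating set of X. -/

import Mathlib

open Subgroup
open scoped Classical

/-- A set `s` is an irredundant generating set of the group `G`: it generates `G`
but no proper subset does. -/
def IrredSet {G : Type*} [Group G] (s : Set G) : Prop :=
  Subgroup.closure s = ⊤ ∧ ∀ x ∈ s, Subgroup.closure (s \ {x}) ≠ ⊤

/-- `mIrr G` is the largest size of an irredundant generating set of `G`. -/
noncomputable def mIrr (G : Type*) [Group G] : ℕ :=
  sSup {n | ∃ s : Set G, s.Finite ∧ s.ncard = n ∧ IrredSet s}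

/-- `dGen G` is the smallest size of a generating set of `G`. -/
noncomputable def dGen (G : Type*) [Group G] : ℕ :=
  sInf {n | ∃ s : Set G, s.Finite ∧ s.ncard = n ∧ Subgroup.closure s = ⊤}

/-- A sequence `g : Fin n → G` is an irredundant generating sequence:
it generates `G` but no proper subsequence does. -/
def IrredSeq {G : Type*} [Group G] {n : ℕ} (g : Fin n → G) : Prop :=
  Subgroup.closure (Set.range g) = ⊤ ∧
  ∀ i : Fin n, Subgroup.closure (g '' {i}ᶜ) ≠ ⊤

/-- `G` satisfies the replacement property: for every irredundant generating
sequence of maximal length `mIrr G` and every nontrivial `x : G`, some entry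
can be replaced by `x` so that the sequence still generates. -/
def ReplacementProperty (G : Type*) [Group G] : Prop :=
  ∀ g : Fin (mIrr G) → G, IrredSeq g → ∀ x : G, x ≠ 1 →
    ∃ i, Subgroup.closure (Set.range (Function.update g i x)) = ⊤

/-- The strong replacement property: replacement holds for irredundant
generating sequences of any length. -/
def StrongReplacementProperty (G : Type*) [Group G] : Prop :=
  ∀ (n : ℕ) (g : Fin n → G), IrredSeq g → ∀ x : G, x ≠ 1 →
    ∃ i, Subgroup.closure (Set.range (Function.update g i x)) = ⊤

/-- `G` is a K-group: its subgroup lattice is complemented. -/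
def IsKGroup (G : Type*) [Group G] : Prop :=
  ∀ H : Subgroup G, ∃ X : Subgroup G, H ⊔ X = ⊤ ∧ H ⊓ X = ⊥

/-- `μ` is the Möbius function of the subgroup lattice of `G`. -/
def IsMobius {G : Type*} [Group G] (μ : Subgroup G → ℤ) : Prop :=
  ∀ H : Subgroup G, ∑ᶠ K ∈ {K : Subgroup G | H ≤ K}, μ K = if H = ⊤ then 1 else 0

/-- `B/A` is a chief factor of `G`. -/
def ChiefFactor {G : Type*} [Group G] (A B : Subgroup G) : Prop :=
  A.Normal ∧ B.Normal ∧ A < B ∧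
    ∀ N : Subgroup G, N.Normal → A ≤ N → N ≤ B → N = A ∨ N = B

/-- The factor `B/A` is complemented in `G/A`: there is a subgroup `K ≥ A`
with `K ⊔ B = G` and `K ⊓ B = A`. -/
def ComplementedFactor {G : Type*} [Group G] (A B : Subgroup G) : Prop :=
  ∃ K : Subgroup G, A ≤ K ∧ K ⊔ B = ⊤ ∧ K ⊓ B = A

/-- `c` is a chief series of `G`. -/
def IsChiefSeries {G : Type*} [Group G] {n : ℕ} (c : Fin (n + 1) → Subgroup G) : Prop :=
  c 0 = ⊥ ∧ c (Fin.last n) = ⊤ ∧ ∀ i : Fin n, ChiefFactor (c i.castSucc) (c i.succ)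

/-- `N` is a minimal normal subgroup of `G`. -/
def IsMinimalNormal {G : Type*} [Group G] (N : Subgroup G) : Prop :=
  N.Normal ∧ N ≠ ⊥ ∧ ∀ K : Subgroup G, K.Normal → K ≤ N → K = ⊥ ∨ K = N

/-- `F` is the Fitting subgroup of `G`: the largest nilpotent normal subgroup. -/
def IsFitting {G : Type*} [Group G] (F : Subgroup G) : Prop :=
  F.Normal ∧ Group.IsNilpotent F ∧
    ∀ K : Subgroup G, K.Normal → Group.IsNilpotent K → K ≤ F

/-!
A minimal normal subgroup `N` of a soluble group is abelian. Hence if `K ⊔ N = G` and `K ≤ D`,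
then `D ⊓ N` is normalised by `K` and centralised by `N`, so it is normal, and minimality forces
`D = G` or `D ⊓ N = 1`.

For `m(G/N) + 1 ≤ m(G)`, lift a largest irredundant generating set of `G/N` injectively into a
complement `H` of `N` and add a nontrivial element of `N`: the result generates by the dichotomy,
and it is irredundant because the lift lies in `H ≠ G` and its image is irredundant mod `N`.

For `m(G) ≤ m(G/N) + 1`, let `s` be irredundant in `G`. If `⟨s ∖ {x, y}⟩ N = G` for distinct
`x, y ∈ s`, the dichotomy gives `⟨s ∖ {x}⟩ = ⟨s ∖ {x, y}⟩ = ⟨s ∖ {y}⟩`, and then this subgroup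
is `⟨s⟩ = G`, which is absurd. So any subset of `s` generating `G` modulo `N` misses at most one
element of `s`; apply this to an injective lift of an irredundant generating subset of the image
of `s` in `G/N`.
-/

section Irredundant

variable {G : Type*} [Group G]

theorem exists_irredSet_subset [Finite G] {s : Set G} (hs : closure s = ⊤) :
    ∃ u ⊆ s, IrredSet u := by
  obtain ⟨u, hus, hu⟩ :=
    exists_minimal_le_of_wellFoundedLT (fun u : Set G ↦ closure u = ⊤) s hs
  refine ⟨u, hus, hu.prop, fun x hx hcl ↦ ?_⟩
  have hdel : u \ {x} = u := hu.eq_of_le hcl Set.sdiff_subset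
  exact (hdel.symm ▸ hx : x ∈ u \ {x}).2 rfl

theorem bddAbove_ncard_irredSet [Finite G] :
    BddAbove {n | ∃ s : Set G, s.Finite ∧ s.ncard = n ∧ IrredSet s} := by
  refine ⟨Nat.card G, ?_⟩
  rintro n ⟨s, -, rfl, -⟩
  exact Set.ncard_le_card s

theorem IrredSet.ncard_le_mIrr [Finite G] {s : Set G} (hs : IrredSet s) : s.ncard ≤ mIrr G :=
  le_csSup bddAbove_ncard_irredSet ⟨s, s.toFinite, rfl, hs⟩

variable (G) in
theorem exists_irredSet_ncard_eq_mIrr [Finite G] :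
    ∃ s : Set G, IrredSet s ∧ s.ncard = mIrr G := by
  obtain ⟨s, -, hs⟩ := exists_irredSet_subset (closure_univ (G := G))
  have hne : {n | ∃ s : Set G, s.Finite ∧ s.ncard = n ∧ IrredSet s}.Nonempty :=
    ⟨_, s, s.toFinite, rfl, hs⟩
  obtain ⟨t, -, ht, hirr⟩ := Nat.sSup_mem hne bddAbove_ncard_irredSet
  exact ⟨t, hirr, ht⟩

end Irredundant

theorem Set.exists_subset_bijOn_of_subset_image {α β : Type*} {f : α → β} {s : Set α}
    {t : Set β} (h : t ⊆ f '' s) : ∃ u ⊆ s, Set.BijOn f u t := by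
  obtain ⟨v, hvs, rfl⟩ := Set.subset_image_iff.mp h
  obtain ⟨u, huv, hu⟩ := Set.exists_subset_bijOn v f
  exact ⟨u, huv.trans hvs, hu⟩

namespace QuotientGroup

variable {G : Type*} [Group G] (N : Subgroup G) [N.Normal]

theorem map_mk'_eq_top_iff (H : Subgroup G) : Subgroup.map (mk' N) H = ⊤ ↔ H ⊔ N = ⊤ := by
  rw [← (comap_injective (mk'_surjective N)).eq_iff, comap_map_mk', comap_top, sup_comm]

theorem closure_image_mk'_eq_top_iff (s : Set G) :
    closure (mk' N '' s) = ⊤ ↔ closure s ⊔ N = ⊤ := by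
  rw [← MonoidHom.map_closure, map_mk'_eq_top_iff]

end QuotientGroup

namespace IsMinimalNormal

variable {G : Type*} [Group G] {N : Subgroup G}

theorem exists_mem_ne_one (hN : IsMinimalNormal N) : ∃ n ∈ N, n ≠ 1 :=
  (N.bot_or_exists_ne_one).resolve_left hN.2.1

theorem le_centralizer [Group.IsSolvable G] (hN : IsMinimalNormal N) : N ≤ centralizer N := by
  have := hN.1
  rw [← commutator_eq_bot_iff_le_centralizer]
  refine (hN.2.2 _ inferInstance (commutator_le_left N N)).resolve_right fun h ↦ ?_
  exact (Group.IsSolvable.commutator_lt_of_ne_bot hN.2.1).ne h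

theorem eq_top_or_inf_eq_bot (hN : IsMinimalNormal N) (hNc : N ≤ centralizer N)
    {K D : Subgroup G} (hKN : K ⊔ N = ⊤) (hKD : K ≤ D) : D = ⊤ ∨ D ⊓ N = ⊥ := by
  have := hN.1
  have hnormal : (D ⊓ N).Normal := by
    refine normalizer_eq_top_iff.mp (top_le_iff.mp (hKN ▸ sup_le ?_ ?_))
    · exact (le_inf (hKD.trans le_normalizer) le_normalizer_of_normal).trans
        inf_normalizer_le_normalizer_inf
    · exact hNc.trans ((centralizer_le inf_le_right).trans (centralizer_le_normalizer _))
  refine (hN.2.2 _ hnormal inf_le_right).symm.imp (fun h ↦ ?_) id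
  exact top_le_iff.mp (hKN ▸ sup_le hKD (h ▸ inf_le_left))

theorem eq_of_le_of_sup_eq_top (hN : IsMinimalNormal N) (hNc : N ≤ centralizer N)
    {K D : Subgroup G} (hKN : K ⊔ N = ⊤) (hKD : K ≤ D) (hD : D ≠ ⊤) : D = K := by
  have := hN.1
  have hDN := (hN.eq_top_or_inf_eq_bot hNc hKN hKD).resolve_left hD
  refine le_antisymm (fun x hx ↦ ?_) hKD
  obtain ⟨k, hk, n, hn, rfl⟩ := mem_sup_of_normal_right.mp (hKN ▸ mem_top x : x ∈ K ⊔ N)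
  have hnD : n ∈ D ⊓ N := ⟨by simpa using D.mul_mem (D.inv_mem (hKD hk)) hx, hn⟩
  rw [hDN, mem_bot] at hnD
  simpa [hnD] using hk

end IsMinimalNormal

open QuotientGroup

section Generation

variable {G : Type*} [Group G] {N : Subgroup G}

theorem IrredSet.closure_sdiff_pair_sup_ne_top (hN : IsMinimalNormal N) (hNc : N ≤ centralizer N)
    {s : Set G} (hs : IrredSet s) {x y : G} (hx : x ∈ s) (hy : y ∈ s) (hxy : x ≠ y) :
    closure (s \ {x, y}) ⊔ N ≠ ⊤ := by
  intro hK
  have hx' : closure (s \ {x}) = closure (s \ {x, y}) :=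
    hN.eq_of_le_of_sup_eq_top hNc hK (closure_mono (by gcongr; simp)) (hs.2 x hx)
  have hy' : closure (s \ {y}) = closure (s \ {x, y}) :=
    hN.eq_of_le_of_sup_eq_top hNc hK (closure_mono (by gcongr; simp)) (hs.2 y hy)
  have hs' : s \ {x} ∪ s \ {y} = s := by
    rw [← Set.sdiff_inter, Set.singleton_inter_eq_empty.mpr (Set.mem_singleton_iff.not.mpr hxy),
      Set.sdiff_empty]
  have hclosure := closure_union (s \ {x}) (s \ {y})
  rw [hs', hs.1, hx', hy', sup_idem] at hclosure
  exact hs.2 x hx (hx'.trans hclosure.symm)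

theorem IrredSet.ncard_le_add_one_of_closure_sup_eq_top (hN : IsMinimalNormal N)
    (hNc : N ≤ centralizer N) {s I : Set G} (hs : IrredSet s) (hsf : s.Finite) (hIs : I ⊆ s)
    (hI : closure I ⊔ N = ⊤) :
    s.ncard ≤ I.ncard + 1 := by
  by_contra! h
  have hsI : 1 < (s \ I).ncard := by
    rw [Set.ncard_sdiff' hIs hsf]
    omega
  obtain ⟨x, y, hx, hy, hxy⟩ := (Set.one_lt_ncard_iff hsf.sdiff).mp hsI
  refine hs.closure_sdiff_pair_sup_ne_top hN hNc hx.1 hy.1 hxy (top_le_iff.mp ?_)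
  rw [← hI]
  gcongr
  rintro z hz
  exact ⟨hIs hz, by rintro (rfl | rfl); exacts [hx.2 hz, hy.2 hz]⟩

theorem IrredSet.ncard_le_mIrr_quotient_add_one [Finite G] [N.Normal] (hN : IsMinimalNormal N)
    (hNc : N ≤ centralizer N) {s : Set G} (hs : IrredSet s) : s.ncard ≤ mIrr (G ⧸ N) + 1 := by
  have himage : closure (mk' N '' s) = ⊤ := by
    rw [closure_image_mk'_eq_top_iff, hs.1, top_sup_eq]
  obtain ⟨u, hu, hirr⟩ := exists_irredSet_subset himage
  obtain ⟨I, hIs, hbij⟩ := Set.exists_subset_bijOn_of_subset_image hu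
  have hI : closure I ⊔ N = ⊤ := by
    rw [← closure_image_mk'_eq_top_iff, hbij.image_eq, hirr.1]
  calc s.ncard ≤ I.ncard + 1 :=
        hs.ncard_le_add_one_of_closure_sup_eq_top hN hNc s.toFinite hIs hI
    _ = u.ncard + 1 := by rw [← hbij.image_eq, hbij.injOn.ncard_image]
    _ ≤ mIrr (G ⧸ N) + 1 := by gcongr; exact hirr.ncard_le_mIrr

theorem IrredSet.insert_of_image_mk' [N.Normal] (hN : IsMinimalNormal N) (hNc : N ≤ centralizer N)
    {s : Set G} (hinj : Set.InjOn (mk' N) s) (hs : IrredSet (mk' N '' s)) (hsG : closure s ≠ ⊤)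
    {n : G} (hn : n ∈ N) (hn1 : n ≠ 1) : IrredSet (insert n s) := by
  have hK : closure s ⊔ N = ⊤ := (closure_image_mk'_eq_top_iff N s).mp hs.1
  refine ⟨?_, ?_⟩
  · refine (hN.eq_top_or_inf_eq_bot hNc hK (closure_mono (Set.subset_insert n s))).resolve_right
      fun h ↦ hn1 ?_
    have hn' : n ∈ closure (insert n s) ⊓ N := ⟨subset_closure (Set.mem_insert n s), hn⟩
    rwa [h, mem_bot] at hn'
  · rintro x (rfl | hx) hcl
    · exact hsG (top_le_iff.mp (hcl ▸ closure_mono (by simp)))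
    · have himage : mk' N '' (s \ {x}) = mk' N '' s \ {mk' N x} := by
        rw [hinj.image_sdiff_subset (Set.singleton_subset_iff.mpr hx), Set.image_singleton]
      refine hs.2 (mk' N x) ⟨x, hx, rfl⟩ ?_
      rw [← himage, closure_image_mk'_eq_top_iff, eq_top_iff, ← hcl, closure_le]
      rintro z ⟨rfl | hz, hzx⟩
      · exact mem_sup_right hn
      · exact mem_sup_left (subset_closure ⟨hz, hzx⟩)

theorem mIrr_quotient_add_one_le [Finite G] [N.Normal] (hN : IsMinimalNormal N)
    (hNc : N ≤ centralizer N) {H : Subgroup G} (hHN : H ⊔ N = ⊤) (hHNbot : H ⊓ N = ⊥) :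
    mIrr (G ⧸ N) + 1 ≤ mIrr G := by
  obtain ⟨t, ht, htcard⟩ := exists_irredSet_ncard_eq_mIrr (G ⧸ N)
  have htH : t ⊆ mk' N '' H := fun q _ ↦ by
    rw [← coe_map, (map_mk'_eq_top_iff N H).mpr hHN]
    trivial
  obtain ⟨s, hsH, hbij⟩ := Set.exists_subset_bijOn_of_subset_image htH
  have hsG : closure s ≠ ⊤ := fun h ↦ hN.2.1 <| by
    have hH : H = ⊤ := eq_top_iff.mpr (h ▸ (closure_le H).mpr hsH)
    rw [← hHNbot, hH, top_inf_eq]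
  obtain ⟨n, hn, hn1⟩ := hN.exists_mem_ne_one
  have hirr := IrredSet.insert_of_image_mk' hN hNc hbij.injOn (hbij.image_eq ▸ ht) hsG hn hn1
  have hns : n ∉ s := fun h ↦ hsG (by simpa [Set.insert_eq_of_mem h] using hirr.1)
  calc mIrr (G ⧸ N) + 1 = (insert n s).ncard := by
        rw [Set.ncard_insert_of_notMem hns, ← htcard, ← hbij.image_eq,
          hbij.injOn.ncard_image]
    _ ≤ mIrr G := hirr.ncard_le_mIrr

end Generation

theorem mIrr_quotient_of_complemented_minimal_normal
    (G : Type*) [Group G] [Finite G] [Group.IsSolvable G]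
    (N : Subgroup G) [N.Normal] (hN : IsMinimalNormal N)
    (hcompl : ∃ H : Subgroup G, H ⊔ N = ⊤ ∧ H ⊓ N = ⊥) :
    mIrr (G ⧸ N) = mIrr G - 1 := by
  obtain ⟨H, hHN, hHNbot⟩ := hcompl
  have hNc := hN.le_centralizer
  obtain ⟨s, hs, hscard⟩ := exists_irredSet_ncard_eq_mIrr G
  have hle := hs.ncard_le_mIrr_quotient_add_one hN hNc
  have hge := mIrr_quotient_add_one_le hN hNc hHN hHNbot
  omega
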